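/- Let m be a positive integer, R a commutative ring which is an ℝ-algebra, and η = diag(1, −1, …, −1) ∈ Mₘ(ℝ) regarded in Mₘ(R). For a row vector q over R set q^t := η⁻¹qᵀ and k₁(q) := [[1, q, ½ q q^t],[0, 1ₘ, q^t],[0, 0, 1]] (blocks of sizes (1, m, 1)). Let Ω = [[f, Π, 0],[Θ, F, η⁻¹Πᵀ],[0, Θᵀη, −f]] and suppose the torsion vanishes, Θ = 0. Then Ω₁ := k₁(q)⁻¹ · Ω · k₁(q) has (2,1) block equal to 0, (3,2) block equal to 0, (1,1) block equal to f, (3,3) block equal to −f, (2,2) block equal to F, and (1,2) block equal to Π − qF + fq. In particular, the dressing by u₁ = k₁(q) preserves the torsion-free condition and leaves the middle curvature block F — hence any condition imposed on F, such as the Ricci-null normality condition — unchanged. -/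

import Mathlib

open Matrix

/-- 3×3 block matrix with block sizes (1, m, 1). -/
def B3 {R : Type*} {m : ℕ}
    (a11 : Matrix (Fin 1) (Fin 1) R) (a12 : Matrix (Fin 1) (Fin m) R) (a13 : Matrix (Fin 1) (Fin 1) R)
    (a21 : Matrix (Fin m) (Fin 1) R) (a22 : Matrix (Fin m) (Fin m) R) (a23 : Matrix (Fin m) (Fin 1) R)
    (a31 : Matrix (Fin 1) (Fin 1) R) (a32 : Matrix (Fin 1) (Fin m) R) (a33 : Matrix (Fin 1) (Fin 1) R) :
    Matrix (Fin 1 ⊕ (Fin m ⊕ Fin 1)) (Fin 1 ⊕ (Fin m ⊕ Fin 1)) R :=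
  Matrix.fromBlocks a11 (Matrix.fromCols a12 a13) (Matrix.fromRows a21 a31)
    (Matrix.fromBlocks a22 a23 a32 a33)

/-- Block extractors for a 3×3 block matrix with block sizes (1, m, 1). -/
def blk11 {R : Type*} {m : ℕ} (M : Matrix (Fin 1 ⊕ (Fin m ⊕ Fin 1)) (Fin 1 ⊕ (Fin m ⊕ Fin 1)) R) :
    Matrix (Fin 1) (Fin 1) R := M.submatrix Sum.inl Sum.inl
def blk12 {R : Type*} {m : ℕ} (M : Matrix (Fin 1 ⊕ (Fin m ⊕ Fin 1)) (Fin 1 ⊕ (Fin m ⊕ Fin 1)) R) :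
    Matrix (Fin 1) (Fin m) R := M.submatrix Sum.inl (fun j => Sum.inr (Sum.inl j))
def blk13 {R : Type*} {m : ℕ} (M : Matrix (Fin 1 ⊕ (Fin m ⊕ Fin 1)) (Fin 1 ⊕ (Fin m ⊕ Fin 1)) R) :
    Matrix (Fin 1) (Fin 1) R := M.submatrix Sum.inl (fun j => Sum.inr (Sum.inr j))
def blk21 {R : Type*} {m : ℕ} (M : Matrix (Fin 1 ⊕ (Fin m ⊕ Fin 1)) (Fin 1 ⊕ (Fin m ⊕ Fin 1)) R) :
    Matrix (Fin m) (Fin 1) R := M.submatrix (fun i => Sum.inr (Sum.inl i)) Sum.inl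
def blk22 {R : Type*} {m : ℕ} (M : Matrix (Fin 1 ⊕ (Fin m ⊕ Fin 1)) (Fin 1 ⊕ (Fin m ⊕ Fin 1)) R) :
    Matrix (Fin m) (Fin m) R := M.submatrix (fun i => Sum.inr (Sum.inl i)) (fun j => Sum.inr (Sum.inl j))
def blk23 {R : Type*} {m : ℕ} (M : Matrix (Fin 1 ⊕ (Fin m ⊕ Fin 1)) (Fin 1 ⊕ (Fin m ⊕ Fin 1)) R) :
    Matrix (Fin m) (Fin 1) R := M.submatrix (fun i => Sum.inr (Sum.inl i)) (fun j => Sum.inr (Sum.inr j))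
def blk31 {R : Type*} {m : ℕ} (M : Matrix (Fin 1 ⊕ (Fin m ⊕ Fin 1)) (Fin 1 ⊕ (Fin m ⊕ Fin 1)) R) :
    Matrix (Fin 1) (Fin 1) R := M.submatrix (fun i => Sum.inr (Sum.inr i)) Sum.inl
def blk32 {R : Type*} {m : ℕ} (M : Matrix (Fin 1 ⊕ (Fin m ⊕ Fin 1)) (Fin 1 ⊕ (Fin m ⊕ Fin 1)) R) :
    Matrix (Fin 1) (Fin m) R := M.submatrix (fun i => Sum.inr (Sum.inr i)) (fun j => Sum.inr (Sum.inl j))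
def blk33 {R : Type*} {m : ℕ} (M : Matrix (Fin 1 ⊕ (Fin m ⊕ Fin 1)) (Fin 1 ⊕ (Fin m ⊕ Fin 1)) R) :
    Matrix (Fin 1) (Fin 1) R := M.submatrix (fun i => Sum.inr (Sum.inr i)) (fun j => Sum.inr (Sum.inr j))

/-- The Minkowski matrix `diag(1, −1, …, −1)` of signature `(1, m−1)`, regarded in `Mₘ(R)`. -/
def MinkR (m : ℕ) (R : Type*) [CommRing R] [Algebra ℝ R] : Matrix (Fin m) (Fin m) R :=
  (Matrix.diagonal fun i : Fin m => if (i : ℕ) = 0 then (1 : ℝ) else -1).map (algebraMap ℝ R)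

/-- For a row vector `q` over `R`, the column vector `q^t := η⁻¹ qᵀ`. -/
noncomputable def rTR {m : ℕ} {R : Type*} [CommRing R] [Algebra ℝ R]
    (q : Matrix (Fin 1) (Fin m) R) : Matrix (Fin m) (Fin 1) R :=
  (MinkR m R)⁻¹ * q.transpose

/-- The special conformal (inversion) group element
`k₁(q) = [[1, q, ½ q q^t],[0, 1ₘ, q^t],[0, 0, 1]]` over `R`. -/
noncomputable def k1R {m : ℕ} {R : Type*} [CommRing R] [Algebra ℝ R]
    (q : Matrix (Fin 1) (Fin m) R) :
    Matrix (Fin 1 ⊕ (Fin m ⊕ Fin 1)) (Fin 1 ⊕ (Fin m ⊕ Fin 1)) R :=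
  B3 1 q ((2⁻¹ : ℝ) • (q * rTR q)) 0 1 (rTR q) 0 0 1

open Matrix

section Aux
variable {R : Type*} [CommRing R] {m : ℕ}

lemma myFromColumns_add {n m₁ m₂ : Type*} (A : Matrix n m₁ R) (B : Matrix n m₂ R)
    (C : Matrix n m₁ R) (D : Matrix n m₂ R) :
    fromCols A B + fromCols C D = fromCols (A + C) (B + D) := by
  ext _ (_ | _) <;> simp

lemma myFromRows_add {n m₁ m₂ : Type*} (A : Matrix m₁ n R) (B : Matrix m₂ n R)
    (C : Matrix m₁ n R) (D : Matrix m₂ n R) :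
    fromRows A B + fromRows C D = fromRows (A + C) (B + D) := by
  ext (_ | _) _ <;> simp

lemma myFromBlocks_add {m₁ m₂ n₁ n₂ : Type*} (A : Matrix m₁ n₁ R) (B : Matrix m₁ n₂ R)
    (C : Matrix m₂ n₁ R) (D : Matrix m₂ n₂ R)
    (A' : Matrix m₁ n₁ R) (B' : Matrix m₁ n₂ R) (C' : Matrix m₂ n₁ R) (D' : Matrix m₂ n₂ R) :
    fromBlocks A B C D + fromBlocks A' B' C' D' = fromBlocks (A + A') (B + B') (C + C') (D + D') := by
  ext (_ | _) (_ | _) <;> simp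

lemma B3_mul
    (a11 : Matrix (Fin 1) (Fin 1) R) (a12 : Matrix (Fin 1) (Fin m) R) (a13 : Matrix (Fin 1) (Fin 1) R)
    (a21 : Matrix (Fin m) (Fin 1) R) (a22 : Matrix (Fin m) (Fin m) R) (a23 : Matrix (Fin m) (Fin 1) R)
    (a31 : Matrix (Fin 1) (Fin 1) R) (a32 : Matrix (Fin 1) (Fin m) R) (a33 : Matrix (Fin 1) (Fin 1) R)
    (b11 : Matrix (Fin 1) (Fin 1) R) (b12 : Matrix (Fin 1) (Fin m) R) (b13 : Matrix (Fin 1) (Fin 1) R)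
    (b21 : Matrix (Fin m) (Fin 1) R) (b22 : Matrix (Fin m) (Fin m) R) (b23 : Matrix (Fin m) (Fin 1) R)
    (b31 : Matrix (Fin 1) (Fin 1) R) (b32 : Matrix (Fin 1) (Fin m) R) (b33 : Matrix (Fin 1) (Fin 1) R) :
    B3 a11 a12 a13 a21 a22 a23 a31 a32 a33 * B3 b11 b12 b13 b21 b22 b23 b31 b32 b33 =
    B3 (a11*b11 + (a12*b21 + a13*b31)) (a11*b12 + (a12*b22 + a13*b32)) (a11*b13 + (a12*b23 + a13*b33))
       (a21*b11 + (a22*b21 + a23*b31)) (a21*b12 + (a22*b22 + a23*b32)) (a21*b13 + (a22*b23 + a23*b33))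
       (a31*b11 + (a32*b21 + a33*b31)) (a31*b12 + (a32*b22 + a33*b32)) (a31*b13 + (a32*b23 + a33*b33)) := by
  simp only [B3, Matrix.fromBlocks_multiply, Matrix.fromCols_mul_fromRows,
    Matrix.fromCols_mul_fromBlocks, Matrix.mul_fromCols, Matrix.fromBlocks_mul_fromRows,
    Matrix.fromRows_mul, Matrix.fromRows_mul_fromCols, myFromBlocks_add,
    myFromColumns_add, myFromRows_add, Matrix.fromRows_fromCols_eq_fromBlocks, Matrix.fromCols_fromRows_eq_fromBlocks]

lemma B3_one : B3 (1 : Matrix (Fin 1) (Fin 1) R) 0 0 0 (1 : Matrix (Fin m) (Fin m) R) 0 0 0 1 = 1 := by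
  simp only [B3, Matrix.fromCols_zero, Matrix.fromRows_zero, Matrix.fromBlocks_one]

end Aux

section Aux2
variable {R : Type*} [CommRing R] [Algebra ℝ R] {m : ℕ}

lemma rTR_neg (q : Matrix (Fin 1) (Fin m) R) : rTR (-q) = -rTR q := by
  simp [rTR]

lemma k1R_mul_neg (q : Matrix (Fin 1) (Fin m) R) : k1R q * k1R (-q) = 1 := by
  rw [k1R, k1R, rTR_neg, B3_mul, ← B3_one]
  have h : (2⁻¹ : ℝ) • (q * rTR q) + (-(q * rTR q) + (2⁻¹ : ℝ) • (q * rTR q)) = 0 := by module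
  simp [mul_neg, neg_mul_neg, h]

lemma k1R_inv (q : Matrix (Fin 1) (Fin m) R) : (k1R q)⁻¹ = k1R (-q) :=
  Matrix.inv_eq_right_inv (k1R_mul_neg q)

end Aux2

section Blk
variable {R : Type*} {m : ℕ}
variable (a11 : Matrix (Fin 1) (Fin 1) R) (a12 : Matrix (Fin 1) (Fin m) R) (a13 : Matrix (Fin 1) (Fin 1) R)
variable (a21 : Matrix (Fin m) (Fin 1) R) (a22 : Matrix (Fin m) (Fin m) R) (a23 : Matrix (Fin m) (Fin 1) R)
variable (a31 : Matrix (Fin 1) (Fin 1) R) (a32 : Matrix (Fin 1) (Fin m) R) (a33 : Matrix (Fin 1) (Fin 1) R)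

lemma blk11_B3 : blk11 (B3 a11 a12 a13 a21 a22 a23 a31 a32 a33) = a11 := by
  ext i j; simp [blk11, B3]
lemma blk12_B3 : blk12 (B3 a11 a12 a13 a21 a22 a23 a31 a32 a33) = a12 := by
  ext i j; simp [blk12, B3]
lemma blk21_B3 : blk21 (B3 a11 a12 a13 a21 a22 a23 a31 a32 a33) = a21 := by
  ext i j; simp [blk21, B3]
lemma blk22_B3 : blk22 (B3 a11 a12 a13 a21 a22 a23 a31 a32 a33) = a22 := by
  ext i j; simp [blk22, B3]
lemma blk32_B3 : blk32 (B3 a11 a12 a13 a21 a22 a23 a31 a32 a33) = a32 := by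
  ext i j; simp [blk32, B3]
lemma blk33_B3 : blk33 (B3 a11 a12 a13 a21 a22 a23 a31 a32 a33) = a33 := by
  ext i j; simp [blk33, B3]
end Blk
/-- Dressing the torsion-free conformal Cartan curvature
`Ω = [[f, Π, 0],[0, F, η⁻¹Πᵀ],[0, 0, −f]]` by `u₁ = k₁(q)`: the blocks of
`Ω₁ = k₁(q)⁻¹ Ω k₁(q)`. The torsion-free condition is preserved, and the middle
curvature block `F` is unchanged. -/
theorem stmt_10 (m : ℕ) (hm : 0 < m) (R : Type*) [CommRing R] [Algebra ℝ R]
    (q : Matrix (Fin 1) (Fin m) R)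
    (f : R) (Pform : Matrix (Fin 1) (Fin m) R) (F : Matrix (Fin m) (Fin m) R) :
    blk21 ((k1R q)⁻¹ * B3 (f • 1) Pform 0 0 F ((MinkR m R)⁻¹ * Pform.transpose)
        0 0 ((-f) • 1) * k1R q) = 0 ∧
    blk32 ((k1R q)⁻¹ * B3 (f • 1) Pform 0 0 F ((MinkR m R)⁻¹ * Pform.transpose)
        0 0 ((-f) • 1) * k1R q) = 0 ∧
    blk11 ((k1R q)⁻¹ * B3 (f • 1) Pform 0 0 F ((MinkR m R)⁻¹ * Pform.transpose)
        0 0 ((-f) • 1) * k1R q) = f • 1 ∧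
    blk33 ((k1R q)⁻¹ * B3 (f • 1) Pform 0 0 F ((MinkR m R)⁻¹ * Pform.transpose)
        0 0 ((-f) • 1) * k1R q) = (-f) • 1 ∧
    blk22 ((k1R q)⁻¹ * B3 (f • 1) Pform 0 0 F ((MinkR m R)⁻¹ * Pform.transpose)
        0 0 ((-f) • 1) * k1R q) = F ∧
    blk12 ((k1R q)⁻¹ * B3 (f • 1) Pform 0 0 F ((MinkR m R)⁻¹ * Pform.transpose)
        0 0 ((-f) • 1) * k1R q) = Pform - q * F + f • q := by
  rw [k1R_inv]
  rw [show (k1R (-q) : Matrix _ _ R) = B3 1 (-q) ((2⁻¹:ℝ) • (q * rTR q)) 0 1 (-(rTR q)) 0 0 1 by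
    rw [k1R, rTR_neg]; simp [neg_mul_neg]]
  rw [k1R, B3_mul, B3_mul]
  refine ⟨?_, ?_, ?_, ?_, ?_, ?_⟩ <;>
    simp [blk11_B3, blk12_B3, blk21_B3, blk22_B3, blk32_B3, blk33_B3, Matrix.smul_mul,
      Matrix.mul_smul, mul_neg, neg_mul]
  abel
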